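/- arXiv:nlin/0309076 — 6 statements merged into one kernel-verified Lean document; each statement's English description precedes it below -/
import Mathlib

section
/- Let ε be a real number and let m : ℝ × ℝ → ℝ be a smooth function of (x,t) whose x-derivative m_x is nowhere zero, and suppose m satisfies the Schwarzian KdV equation m_t = (ε²/12)(m_{xxx} − (3/2) m_{xx}²/m_x). Then the function u := (ε²/4)(m_{xxx}/m_x − (3/2)(m_{xx}/m_x)²) satisfies the KdV equation u_t = u u_x + (ε²/12) u_{xxx} at every point of ℝ × ℝ. -/
namespace SchwarzianKdVAux

/-- partial derivative in the `x` direction -/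
noncomputable def M1 (m : ℝ × ℝ → ℝ) : ℝ × ℝ → ℝ := fun p => fderiv ℝ m p (1, 0)

noncomputable def M2 (m : ℝ × ℝ → ℝ) : ℝ × ℝ → ℝ := M1 (M1 m)
noncomputable def M3 (m : ℝ × ℝ → ℝ) : ℝ × ℝ → ℝ := M1 (M2 m)
noncomputable def M4 (m : ℝ × ℝ → ℝ) : ℝ × ℝ → ℝ := M1 (M3 m)
noncomputable def M5 (m : ℝ × ℝ → ℝ) : ℝ × ℝ → ℝ := M1 (M4 m)
noncomputable def M6 (m : ℝ × ℝ → ℝ) : ℝ × ℝ → ℝ := M1 (M5 m)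

noncomputable def E (ε : ℝ) (m : ℝ × ℝ → ℝ) : ℝ × ℝ → ℝ := fun p =>
  ε ^ 2 / 12 * (M3 m p - 3 / 2 * M2 m p ^ 2 / M1 m p)

noncomputable def E1 (ε : ℝ) (m : ℝ × ℝ → ℝ) : ℝ × ℝ → ℝ := fun p =>
  ε ^ 2 * (3 * M2 m p ^ 3 - 6 * (M1 m p * (M2 m p * M3 m p))
      + 2 * (M1 m p ^ 2 * M4 m p)) / (24 * M1 m p ^ 2)

noncomputable def E2 (ε : ℝ) (m : ℝ × ℝ → ℝ) : ℝ × ℝ → ℝ := fun p =>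
  ε ^ 2 * (-6 * M2 m p ^ 4 + 15 * (M1 m p * (M2 m p ^ 2 * M3 m p))
      - 6 * (M1 m p ^ 2 * M3 m p ^ 2) - 6 * (M1 m p ^ 2 * (M2 m p * M4 m p))
      + 2 * (M1 m p ^ 3 * M5 m p)) / (24 * M1 m p ^ 3)

noncomputable def E3 (ε : ℝ) (m : ℝ × ℝ → ℝ) : ℝ × ℝ → ℝ := fun p =>
  ε ^ 2 * (18 * M2 m p ^ 5 - 54 * (M1 m p * (M2 m p ^ 3 * M3 m p))
      + 36 * (M1 m p ^ 2 * (M2 m p * M3 m p ^ 2))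
      + 21 * (M1 m p ^ 2 * (M2 m p ^ 2 * M4 m p))
      - 18 * (M1 m p ^ 3 * (M3 m p * M4 m p))
      - 6 * (M1 m p ^ 3 * (M2 m p * M5 m p))
      + 2 * (M1 m p ^ 4 * M6 m p)) / (24 * M1 m p ^ 4)

noncomputable def U (ε : ℝ) (m : ℝ × ℝ → ℝ) : ℝ × ℝ → ℝ := fun p =>
  ε ^ 2 / 4 * (M3 m p / M1 m p - 3 / 2 * (M2 m p / M1 m p) ^ 2)

noncomputable def U1 (ε : ℝ) (m : ℝ × ℝ → ℝ) : ℝ × ℝ → ℝ := fun p =>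
  ε ^ 2 * (3 * M2 m p ^ 3 - 4 * (M1 m p * (M2 m p * M3 m p))
      + M1 m p ^ 2 * M4 m p) / (4 * M1 m p ^ 3)

noncomputable def U2 (ε : ℝ) (m : ℝ × ℝ → ℝ) : ℝ × ℝ → ℝ := fun p =>
  ε ^ 2 * (-9 * M2 m p ^ 4 + 17 * (M1 m p * (M2 m p ^ 2 * M3 m p))
      - 4 * (M1 m p ^ 2 * M3 m p ^ 2) - 5 * (M1 m p ^ 2 * (M2 m p * M4 m p))
      + M1 m p ^ 3 * M5 m p) / (4 * M1 m p ^ 4)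

noncomputable def U3 (ε : ℝ) (m : ℝ × ℝ → ℝ) : ℝ × ℝ → ℝ := fun p =>
  ε ^ 2 * (36 * M2 m p ^ 5 - 87 * (M1 m p * (M2 m p ^ 3 * M3 m p))
      + 42 * (M1 m p ^ 2 * (M2 m p * M3 m p ^ 2))
      + 27 * (M1 m p ^ 2 * (M2 m p ^ 2 * M4 m p))
      - 13 * (M1 m p ^ 3 * (M3 m p * M4 m p))
      - 6 * (M1 m p ^ 3 * (M2 m p * M5 m p))
      + M1 m p ^ 4 * M6 m p) / (4 * M1 m p ^ 5)

theorem hasDerivAt_sliceX {f : ℝ × ℝ → ℝ} {x t : ℝ} (hf : DifferentiableAt ℝ f (x, t)) :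
    HasDerivAt (fun y => f (y, t)) (fderiv ℝ f (x, t) (1, 0)) x :=
  hf.hasFDerivAt.comp_hasDerivAt x ((hasDerivAt_id x).prodMk (hasDerivAt_const x t))

theorem hasDerivAt_sliceT {f : ℝ × ℝ → ℝ} {x t : ℝ} (hf : DifferentiableAt ℝ f (x, t)) :
    HasDerivAt (fun s => f (x, s)) (fderiv ℝ f (x, t) (0, 1)) t :=
  hf.hasFDerivAt.comp_hasDerivAt t ((hasDerivAt_const t x).prodMk (hasDerivAt_id t))

theorem contDiff_M1 {m : ℝ × ℝ → ℝ} (hm : ContDiff ℝ (⊤ : ℕ∞) m) : ContDiff ℝ (⊤ : ℕ∞) (M1 m) :=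
  (hm.fderiv_right (by simp)).clm_apply contDiff_const

theorem hasDerivAt_M {f : ℝ × ℝ → ℝ} (hf : ContDiff ℝ (⊤ : ℕ∞) f) (y s : ℝ) :
    HasDerivAt (fun z => f (z, s)) (M1 f (y, s)) y :=
  hasDerivAt_sliceX ((hf.differentiable (by simp)) (y, s))

theorem fderiv_swap {f : ℝ × ℝ → ℝ} (hf : ContDiff ℝ (⊤ : ℕ∞) f) (p : ℝ × ℝ) :
    fderiv ℝ (fun q => fderiv ℝ f q (1, 0)) p (0, 1)
      = fderiv ℝ (fun q => fderiv ℝ f q (0, 1)) p (1, 0) := by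
  have hd : ∀ q, HasFDerivAt f (fderiv ℝ f q) q := fun q =>
    ((hf.differentiable (by simp)) q).hasFDerivAt
  have hd2 : HasFDerivAt (fderiv ℝ f) (fderiv ℝ (fderiv ℝ f) p) p :=
    (((hf.fderiv_right (m := 1) (WithTop.coe_le_coe.mpr le_top)).differentiable (by simp)) p).hasFDerivAt
  have hsym := second_derivative_symmetric hd hd2
  have key : ∀ v w : ℝ × ℝ, fderiv ℝ (fun q => fderiv ℝ f q v) p w
      = fderiv ℝ (fderiv ℝ f) p w v := by
    intro v w
    have h : HasFDerivAt (fun q => fderiv ℝ f q v)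
        ((fderiv ℝ (fderiv ℝ f) p).flip v) p := by
      have := hd2.clm_apply (hasFDerivAt_const v p)
      simpa using this
    rw [h.fderiv]
    simp
  rw [key, key, hsym]

end SchwarzianKdVAux

set_option maxHeartbeats 4000000 in
open SchwarzianKdVAux in
/-- If `m : ℝ × ℝ → ℝ` is smooth with nowhere-vanishing
`x`-derivative and solves the Schwarzian KdV equation
`m_t = (ε²/12)(m_{xxx} − (3/2) m_{xx}²/m_x)`, then
`u := (ε²/4)(m_{xxx}/m_x − (3/2)(m_{xx}/m_x)²)` (i.e. `(ε²/4)` times the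
Schwarzian derivative of `m` in `x`) solves the KdV equation
`u_t = u u_x + (ε²/12) u_{xxx}` at every point. -/
theorem schwarzian_kdv_to_kdv
    (ε : ℝ) (m : ℝ × ℝ → ℝ)
    (hm : ContDiff ℝ (⊤ : ℕ∞) m)
    (mx mxx mxxx mt u : ℝ → ℝ → ℝ)
    (hmx : ∀ x t, mx x t = deriv (fun y => m (y, t)) x)
    (hmxx : ∀ x t, mxx x t = deriv (fun y => mx y t) x)
    (hmxxx : ∀ x t, mxxx x t = deriv (fun y => mxx y t) x)
    (hmt : ∀ x t, mt x t = deriv (fun s => m (x, s)) t)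
    (hne : ∀ x t, mx x t ≠ 0)
    (hSKdV : ∀ x t, mt x t
      = (ε ^ 2 / 12) * (mxxx x t - (3 / 2) * (mxx x t) ^ 2 / mx x t))
    (hu : ∀ x t, u x t
      = (ε ^ 2 / 4) * (mxxx x t / mx x t - (3 / 2) * (mxx x t / mx x t) ^ 2)) :
    ∀ x t, deriv (fun s => u x s) t
      = u x t * deriv (fun y => u y t) x
        + (ε ^ 2 / 12) *
          deriv (fun y => deriv (fun z => deriv (fun w => u w t) z) y) x := by
  intro x t
  -- basic smoothness facts
  have dm : ∀ p : ℝ × ℝ, DifferentiableAt ℝ m p := fun p => (hm.differentiable (by simp)) p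
  have sM1 : ContDiff ℝ (⊤ : ℕ∞) (M1 m) := contDiff_M1 hm
  have sM2 : ContDiff ℝ (⊤ : ℕ∞) (M2 m) := contDiff_M1 sM1
  have sM3 : ContDiff ℝ (⊤ : ℕ∞) (M3 m) := contDiff_M1 sM2
  have sM4 : ContDiff ℝ (⊤ : ℕ∞) (M4 m) := contDiff_M1 sM3
  have sM5 : ContDiff ℝ (⊤ : ℕ∞) (M5 m) := contDiff_M1 sM4
  have hX1 : ∀ y s : ℝ, HasDerivAt (fun z => M1 m (z, s)) (M2 m (y, s)) y :=
    fun y s => hasDerivAt_M sM1 y s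
  have hX2 : ∀ y s : ℝ, HasDerivAt (fun z => M2 m (z, s)) (M3 m (y, s)) y :=
    fun y s => hasDerivAt_M sM2 y s
  have hX3 : ∀ y s : ℝ, HasDerivAt (fun z => M3 m (z, s)) (M4 m (y, s)) y :=
    fun y s => hasDerivAt_M sM3 y s
  have hX4 : ∀ y s : ℝ, HasDerivAt (fun z => M4 m (z, s)) (M5 m (y, s)) y :=
    fun y s => hasDerivAt_M sM4 y s
  have hX5 : ∀ y s : ℝ, HasDerivAt (fun z => M5 m (z, s)) (M6 m (y, s)) y :=
    fun y s => hasDerivAt_M sM5 y s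
  -- translating the hypotheses
  have hmx' : ∀ a b : ℝ, mx a b = M1 m (a, b) := fun a b =>
    (hmx a b).trans (hasDerivAt_sliceX (dm (a, b))).deriv
  have hne1 : ∀ p : ℝ × ℝ, M1 m p ≠ 0 := by
    rintro ⟨a, b⟩
    have h := hne a b
    rwa [hmx'] at h
  have hmxx' : ∀ a b : ℝ, mxx a b = M2 m (a, b) := by
    intro a b
    rw [hmxx]
    have h : (fun y => mx y b) = fun y => M1 m (y, b) := funext fun y => hmx' y b
    rw [h, (hX1 a b).deriv]
  have hmxxx' : ∀ a b : ℝ, mxxx a b = M3 m (a, b) := by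
    intro a b
    rw [hmxxx]
    have h : (fun y => mxx y b) = fun y => M2 m (y, b) := funext fun y => hmxx' y b
    rw [h, (hX2 a b).deriv]
  have hEeq : (fun p : ℝ × ℝ => fderiv ℝ m p (0, 1)) = E ε m := by
    funext p
    obtain ⟨a, b⟩ := p
    have h1 : fderiv ℝ m (a, b) (0, 1) = deriv (fun s => m (a, s)) b :=
      (hasDerivAt_sliceT (dm (a, b))).deriv.symm
    rw [h1, ← hmt, hSKdV, hmx', hmxx', hmxxx']
    simp only [E]
  -- smoothness of E, E1, E2
  have sE : ContDiff ℝ (⊤ : ℕ∞) (E ε m) :=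
    contDiff_const.mul (sM3.sub ((contDiff_const.mul (sM2.pow 2)).div sM1 hne1))
  have hden2 : ∀ p : ℝ × ℝ, (24 : ℝ) * M1 m p ^ 2 ≠ 0 := fun p =>
    mul_ne_zero (by norm_num) (pow_ne_zero _ (hne1 p))
  have hden3 : ∀ p : ℝ × ℝ, (24 : ℝ) * M1 m p ^ 3 ≠ 0 := fun p =>
    mul_ne_zero (by norm_num) (pow_ne_zero _ (hne1 p))
  have sE1 : ContDiff ℝ (⊤ : ℕ∞) (E1 ε m) :=
    (contDiff_const.mul
      (((contDiff_const.mul (sM2.pow 3)).sub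
          (contDiff_const.mul (sM1.mul (sM2.mul sM3)))).add
        (contDiff_const.mul ((sM1.pow 2).mul sM4)))).div
      (contDiff_const.mul (sM1.pow 2)) hden2
  have sE2 : ContDiff ℝ (⊤ : ℕ∞) (E2 ε m) :=
    (contDiff_const.mul
      ((((((contDiff_const.mul (sM2.pow 4)).add
            (contDiff_const.mul (sM1.mul ((sM2.pow 2).mul sM3)))).sub
          (contDiff_const.mul ((sM1.pow 2).mul (sM3.pow 2)))).sub
          (contDiff_const.mul ((sM1.pow 2).mul (sM2.mul sM4)))).add
          (contDiff_const.mul ((sM1.pow 3).mul sM5))))).div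
      (contDiff_const.mul (sM1.pow 3)) hden3
  -- x-derivatives of E, E1, E2
  have hXE : ∀ y s : ℝ, HasDerivAt (fun z => E ε m (z, s)) (E1 ε m (y, s)) y := by
    intro y s
    have hne' : M1 m (y, s) ≠ 0 := hne1 _
    have comb := ((hX3 y s).sub
      ((((hX2 y s).pow 2).const_mul ((3 : ℝ) / 2)).div (hX1 y s) hne')).const_mul
        (ε ^ 2 / 12)
    exact comb.congr_deriv (by simp only [E1, Pi.pow_apply, Pi.div_apply, Pi.mul_apply, Pi.add_apply, Pi.sub_apply]; field_simp; ring)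
  have hXE1 : ∀ y s : ℝ, HasDerivAt (fun z => E1 ε m (z, s)) (E2 ε m (y, s)) y := by
    intro y s
    have hne' : M1 m (y, s) ≠ 0 := hne1 _
    have c1 := ((hX2 y s).pow 3).const_mul (3 : ℝ)
    have c2 := (((hX1 y s).mul ((hX2 y s).mul (hX3 y s)))).const_mul (6 : ℝ)
    have c3 := (((hX1 y s).pow 2).mul (hX4 y s)).const_mul (2 : ℝ)
    have num := ((c1.sub c2).add c3).const_mul (ε ^ 2)
    have den := ((hX1 y s).pow 2).const_mul (24 : ℝ)
    have comb := num.div den (hden2 _)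
    exact comb.congr_deriv (by simp only [E2, Pi.pow_apply, Pi.div_apply, Pi.mul_apply, Pi.add_apply, Pi.sub_apply]; field_simp; ring)
  have hXE2 : ∀ y s : ℝ, HasDerivAt (fun z => E2 ε m (z, s)) (E3 ε m (y, s)) y := by
    intro y s
    have hne' : M1 m (y, s) ≠ 0 := hne1 _
    have c1 := ((hX2 y s).pow 4).const_mul (-6 : ℝ)
    have c2 := ((hX1 y s).mul (((hX2 y s).pow 2).mul (hX3 y s))).const_mul (15 : ℝ)
    have c3 := (((hX1 y s).pow 2).mul ((hX3 y s).pow 2)).const_mul (6 : ℝ)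
    have c4 := (((hX1 y s).pow 2).mul ((hX2 y s).mul (hX4 y s))).const_mul (6 : ℝ)
    have c5 := (((hX1 y s).pow 3).mul (hX5 y s)).const_mul (2 : ℝ)
    have num := ((((c1.add c2).sub c3).sub c4).add c5).const_mul (ε ^ 2)
    have den := ((hX1 y s).pow 3).const_mul (24 : ℝ)
    have comb := num.div den (hden3 _)
    exact comb.congr_deriv (by simp only [E3, Pi.pow_apply, Pi.div_apply, Pi.mul_apply, Pi.add_apply, Pi.sub_apply]; field_simp; ring)
  -- mixed partials: t-derivatives of M1, M2, M3
  have dE : ∀ p : ℝ × ℝ, DifferentiableAt ℝ (E ε m) p := fun p =>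
    (sE.differentiable (by simp)) p
  have dE1 : ∀ p : ℝ × ℝ, DifferentiableAt ℝ (E1 ε m) p := fun p =>
    (sE1.differentiable (by simp)) p
  have dE2 : ∀ p : ℝ × ℝ, DifferentiableAt ℝ (E2 ε m) p := fun p =>
    (sE2.differentiable (by simp)) p
  have hT1 : ∀ p : ℝ × ℝ, fderiv ℝ (M1 m) p (0, 1) = E1 ε m p := by
    rintro ⟨a, b⟩
    have hs := fderiv_swap hm (a, b)
    rw [hEeq] at hs
    rw [show M1 m = (fun q : ℝ × ℝ => fderiv ℝ m q (1, 0)) from rfl, hs]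
    exact (hasDerivAt_sliceX (dE (a, b))).unique (hXE a b)
  have hT2 : ∀ p : ℝ × ℝ, fderiv ℝ (M2 m) p (0, 1) = E2 ε m p := by
    rintro ⟨a, b⟩
    have hs := fderiv_swap sM1 (a, b)
    rw [show (fun q : ℝ × ℝ => fderiv ℝ (M1 m) q (0, 1)) = E1 ε m from funext hT1] at hs
    rw [show M2 m = (fun q : ℝ × ℝ => fderiv ℝ (M1 m) q (1, 0)) from rfl, hs]
    exact (hasDerivAt_sliceX (dE1 (a, b))).unique (hXE1 a b)
  have hT3 : ∀ p : ℝ × ℝ, fderiv ℝ (M3 m) p (0, 1) = E3 ε m p := by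
    rintro ⟨a, b⟩
    have hs := fderiv_swap sM2 (a, b)
    rw [show (fun q : ℝ × ℝ => fderiv ℝ (M2 m) q (0, 1)) = E2 ε m from funext hT2] at hs
    rw [show M3 m = (fun q : ℝ × ℝ => fderiv ℝ (M2 m) q (1, 0)) from rfl, hs]
    exact (hasDerivAt_sliceX (dE2 (a, b))).unique (hXE2 a b)
  -- x-derivatives of U, U1, U2
  have hXU : ∀ y s : ℝ, HasDerivAt (fun z => U ε m (z, s)) (U1 ε m (y, s)) y := by
    intro y s
    have hne' : M1 m (y, s) ≠ 0 := hne1 _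
    have comb := (((hX3 y s).div (hX1 y s) hne').sub
      ((((hX2 y s).div (hX1 y s) hne').pow 2).const_mul ((3 : ℝ) / 2))).const_mul
        (ε ^ 2 / 4)
    exact comb.congr_deriv (by simp only [U1, Pi.pow_apply, Pi.div_apply, Pi.mul_apply, Pi.add_apply, Pi.sub_apply]; field_simp; ring_nf; field_simp; ring)
  have hden4 : ∀ p : ℝ × ℝ, (4 : ℝ) * M1 m p ^ 3 ≠ 0 := fun p =>
    mul_ne_zero (by norm_num) (pow_ne_zero _ (hne1 p))
  have hden5 : ∀ p : ℝ × ℝ, (4 : ℝ) * M1 m p ^ 4 ≠ 0 := fun p =>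
    mul_ne_zero (by norm_num) (pow_ne_zero _ (hne1 p))
  have hXU1 : ∀ y s : ℝ, HasDerivAt (fun z => U1 ε m (z, s)) (U2 ε m (y, s)) y := by
    intro y s
    have hne' : M1 m (y, s) ≠ 0 := hne1 _
    have c1 := ((hX2 y s).pow 3).const_mul (3 : ℝ)
    have c2 := ((hX1 y s).mul ((hX2 y s).mul (hX3 y s))).const_mul (4 : ℝ)
    have c3 := ((hX1 y s).pow 2).mul (hX4 y s)
    have num := ((c1.sub c2).add c3).const_mul (ε ^ 2)
    have den := ((hX1 y s).pow 3).const_mul (4 : ℝ)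
    have comb := num.div den (hden4 _)
    exact comb.congr_deriv (by simp only [U2, Pi.pow_apply, Pi.div_apply, Pi.mul_apply, Pi.add_apply, Pi.sub_apply]; field_simp; ring)
  have hXU2 : ∀ y s : ℝ, HasDerivAt (fun z => U2 ε m (z, s)) (U3 ε m (y, s)) y := by
    intro y s
    have hne' : M1 m (y, s) ≠ 0 := hne1 _
    have c1 := ((hX2 y s).pow 4).const_mul (-9 : ℝ)
    have c2 := ((hX1 y s).mul (((hX2 y s).pow 2).mul (hX3 y s))).const_mul (17 : ℝ)
    have c3 := (((hX1 y s).pow 2).mul ((hX3 y s).pow 2)).const_mul (4 : ℝ)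
    have c4 := (((hX1 y s).pow 2).mul ((hX2 y s).mul (hX4 y s))).const_mul (5 : ℝ)
    have c5 := ((hX1 y s).pow 3).mul (hX5 y s)
    have num := ((((c1.add c2).sub c3).sub c4).add c5).const_mul (ε ^ 2)
    have den := ((hX1 y s).pow 4).const_mul (4 : ℝ)
    have comb := num.div den (hden5 _)
    exact comb.congr_deriv (by simp only [U3, Pi.pow_apply, Pi.div_apply, Pi.mul_apply, Pi.add_apply, Pi.sub_apply]; field_simp; ring)
  -- u equals U
  have hu' : ∀ a b : ℝ, u a b = U ε m (a, b) := by
    intro a b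
    rw [hu, hmx', hmxx', hmxxx']
    simp only [U]
  -- t-derivative of U
  have hM1t : HasDerivAt (fun s => M1 m (x, s)) (E1 ε m (x, t)) t := by
    have h := hasDerivAt_sliceT ((sM1.differentiable (by simp)) (x, t))
    rwa [hT1 (x, t)] at h
  have hM2t : HasDerivAt (fun s => M2 m (x, s)) (E2 ε m (x, t)) t := by
    have h := hasDerivAt_sliceT ((sM2.differentiable (by simp)) (x, t))
    rwa [hT2 (x, t)] at h
  have hM3t : HasDerivAt (fun s => M3 m (x, s)) (E3 ε m (x, t)) t := by
    have h := hasDerivAt_sliceT ((sM3.differentiable (by simp)) (x, t))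
    rwa [hT3 (x, t)] at h
  have hne' : M1 m (x, t) ≠ 0 := hne1 _
  have hUt : HasDerivAt (fun s => U ε m (x, s))
      (U ε m (x, t) * U1 ε m (x, t) + ε ^ 2 / 12 * U3 ε m (x, t)) t := by
    have comb := ((hM3t.div hM1t hne').sub
      (((hM2t.div hM1t hne').pow 2).const_mul ((3 : ℝ) / 2))).const_mul (ε ^ 2 / 4)
    exact comb.congr_deriv
      (by simp only [U, U1, U3, E1, E2, E3, Pi.pow_apply, Pi.div_apply, Pi.mul_apply, Pi.add_apply, Pi.sub_apply]; field_simp; ring_nf; field_simp; ring)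
  -- now rewrite the goal
  have g1 : (fun s => u x s) = fun s => U ε m (x, s) := funext fun s => hu' x s
  have g2 : (fun w => u w t) = fun w => U ε m (w, t) := funext fun w => hu' w t
  rw [g1, hUt.deriv, g2]
  have g3 : (fun z => deriv (fun w => U ε m (w, t)) z) = fun z => U1 ε m (z, t) :=
    funext fun z => (hXU z t).deriv
  rw [g3]
  have g4 : (fun y => deriv (fun z => U1 ε m (z, t)) y) = fun y => U2 ε m (y, t) :=
    funext fun y => (hXU1 y t).deriv
  rw [g4]
  rw [(hXU x t).deriv, (hXU2 x t).deriv, hu' x t]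
end

section
/- Let v : ℝ → ℝ be smooth with v' nowhere zero, and let n ≥ 1 be a natural number. Then the Riemann hierarchy flow vⁿ v' admits the following multi-Hamiltonian representations, where H_m has variational derivative δH_m = m v^{m−1}: (i) Sokolov form: v' · vⁿ = vⁿ v', where vⁿ is an antiderivative of v' · δH_n = n v^{n−1} v'; (ii) K-form: ∂_x(v · (n+1)vⁿ) + v · ∂_x((n+1)vⁿ) = (n+1)(2n+1) vⁿ v'; (iii) D-form: ∂_x((n+2)v^{n+1}) = (n+1)(n+2) vⁿ v'; (iv) Dorfman form: ∂_x((1/v') ∂_x((1/v') ∂_x((n+4) v^{n+3}))) = (n+1)(n+2)(n+3)(n+4) vⁿ v'. -/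
/-- For smooth `v : ℝ → ℝ` with nowhere-vanishing derivative
and `n ≥ 1`, the Riemann hierarchy flow `vⁿ v'` admits the multi-Hamiltonian
representations (with `δH_m = m v^(m−1)`):
(i) Sokolov form `S δHₙ = vⁿ v'`, where `vⁿ` is an antiderivative of
    `v'·δHₙ = n v^(n−1) v'`;
(ii) K-form `∂x(v·(n+1)vⁿ) + v·∂x((n+1)vⁿ) = (n+1)(2n+1) vⁿ v'`;
(iii) D-form `∂x((n+2)v^(n+1)) = (n+1)(n+2) vⁿ v'`;
(iv) Dorfman form
    `∂x((1/v')∂x((1/v')∂x((n+4)v^(n+3)))) = (n+1)(n+2)(n+3)(n+4) vⁿ v'`. -/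
theorem riemann_hierarchy_multi_hamiltonian
    (v : ℝ → ℝ) (hv : ContDiff ℝ (⊤ : ℕ∞) v) (hne : ∀ x, deriv v x ≠ 0)
    (n : ℕ) (hn : 1 ≤ n) :
    -- (i) Sokolov form: vⁿ is an antiderivative of v'·δHₙ = n v^(n−1) v',
    --     and v' · vⁿ = vⁿ v'
    (∀ x, deriv (fun y => (v y) ^ n) x
        = deriv v x * ((n : ℝ) * (v x) ^ (n - 1)))
    ∧ (∀ x, deriv v x * (v x) ^ n = (v x) ^ n * deriv v x)
    -- (ii) K-form
    ∧ (∀ x, deriv (fun y => v y * (((n : ℝ) + 1) * (v y) ^ n)) x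
          + v x * deriv (fun y => ((n : ℝ) + 1) * (v y) ^ n) x
        = ((n : ℝ) + 1) * (2 * (n : ℝ) + 1) * (v x) ^ n * deriv v x)
    -- (iii) D-form
    ∧ (∀ x, deriv (fun y => ((n : ℝ) + 2) * (v y) ^ (n + 1)) x
        = ((n : ℝ) + 1) * ((n : ℝ) + 2) * (v x) ^ n * deriv v x)
    -- (iv) Dorfman form
    ∧ (∀ x, deriv (fun y => (1 / deriv v y) *
            deriv (fun z => (1 / deriv v z) *
              deriv (fun w => ((n : ℝ) + 4) * (v w) ^ (n + 3)) z) y) x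
        = ((n : ℝ) + 1) * ((n : ℝ) + 2) * ((n : ℝ) + 3) * ((n : ℝ) + 4)
            * (v x) ^ n * deriv v x) := by
  have hd : ∀ x, HasDerivAt v (deriv v x) x := fun x =>
    (hv.differentiable (by simp) x).hasDerivAt
  have hpow : ∀ (m : ℕ) (x : ℝ), HasDerivAt (fun y => (v y) ^ m)
      ((m : ℝ) * (v x) ^ (m - 1) * deriv v x) x := fun m x => (hd x).pow m
  have hn1 : n - 1 + 1 = n := Nat.succ_pred_eq_of_pos hn
  have hvn : ∀ x, (v x) ^ (n - 1) * v x = (v x) ^ n := fun x => by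
    rw [← pow_succ, hn1]
  refine ⟨fun x => ?_, fun x => mul_comm _ _, fun x => ?_, fun x => ?_, fun x => ?_⟩
  · rw [(hpow n x).deriv]; ring
  · have h1 : (fun y => v y * (((n : ℝ) + 1) * (v y) ^ n))
        = fun y => ((n : ℝ) + 1) * (v y) ^ (n + 1) := by
      funext y; rw [pow_succ]; ring
    rw [h1, (((hpow (n+1) x)).const_mul ((n : ℝ) + 1)).deriv,
      (((hpow n x)).const_mul ((n : ℝ) + 1)).deriv]
    push_cast [Nat.add_sub_cancel]
    linear_combination ((n : ℝ) + 1) * (n : ℝ) * deriv v x * hvn x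
  · rw [(((hpow (n+1) x)).const_mul ((n : ℝ) + 2)).deriv]
    push_cast [Nat.add_sub_cancel]
    ring
  · have key : ∀ (m : ℕ) (c : ℝ), (fun z => (1 / deriv v z) *
        deriv (fun w => c * (v w) ^ (m + 1)) z)
        = fun z => c * ((m : ℝ) + 1) * (v z) ^ m := by
      intro m c; funext z
      rw [(((hpow (m+1) z)).const_mul c).deriv]
      push_cast [Nat.add_sub_cancel]
      field_simp [hne z]
    have h3 : n + 3 = (n + 2) + 1 := by ring
    have h2 : n + 2 = (n + 1) + 1 := by ring
    have e1 : (fun z => (1 / deriv v z) *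
        deriv (fun w => ((n : ℝ) + 4) * (v w) ^ (n + 3)) z)
        = fun z => (((n : ℝ) + 4) * ((n : ℝ) + 2 + 1)) * (v z) ^ (n + 2) := by
      funext z; rw [h3, congrFun (key (n + 2) ((n : ℝ) + 4)) z]
      push_cast; ring
    rw [show (fun y => (1 / deriv v y) *
            deriv (fun z => (1 / deriv v z) *
              deriv (fun w => ((n : ℝ) + 4) * (v w) ^ (n + 3)) z) y)
        = fun z => (((n : ℝ) + 4) * ((n : ℝ) + 2 + 1)) * ((n : ℝ) + 1 + 1) * (v z) ^ (n + 1) from by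
      funext y
      rw [e1, h2, congrFun (key (n + 1) (((n : ℝ) + 4) * ((n : ℝ) + 2 + 1))) y]
      push_cast; ring,
      (((hpow (n+1) x)).const_mul _).deriv]
    push_cast [Nat.add_sub_cancel]
    ring
end

section
/- Let v : ℝ → ℝ be smooth with v' nowhere zero. Then v' · [ ∂_x(v''² / v'³) + ∂²_x(v'' / v'²) ] = ∂_x( v'''/v' − (3/2)(v''/v')² ). Consequently, the right-hand side of the Schwarzian KdV equation v_t = v_x {v,x} equals S δH₁, where δH₁ = ∂_x(v_{xx}²/v_x³) + ∂²_x(v_{xx}/v_x²) is the variational derivative of H₁ = (1/2)∫ v_x^{−2} v_{xx}² dx, S = v_x D⁻¹ v_x is the Sokolov operator, and the antiderivative D⁻¹(v_x δH₁) is chosen to be the Schwarzian derivative {v,x}. -/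
/-- For smooth `v : ℝ → ℝ` with nowhere-vanishing derivative,
`v' · [ ∂x(v''²/v'³) + ∂²x(v''/v'²) ] = ∂x( v'''/v' − (3/2)(v''/v')² )`.
The left-hand side is the Sokolov operator `S = v_x D⁻¹ v_x` applied to
`δH₁ = ∂x(v_{xx}²/v_x³) + ∂²x(v_{xx}/v_x²)` (with the antiderivative
`D⁻¹(v_x δH₁)` chosen to be the Schwarzian derivative `{v,x}`), and the
right-hand side is `∂x` of the Schwarzian derivative, so the right-hand side of
the Schwarzian KdV equation `v_t = v_x {v,x}` equals `S δH₁`. -/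
theorem sokolov_schwarzian_kdv_H1
    (v : ℝ → ℝ) (hv : ContDiff ℝ (⊤ : ℕ∞) v) (hne : ∀ x, deriv v x ≠ 0) :
    ∀ x,
      deriv v x *
        (deriv (fun y => (deriv (deriv v) y) ^ 2 / (deriv v y) ^ 3) x
          + deriv (deriv (fun y => deriv (deriv v) y / (deriv v y) ^ 2)) x)
      = deriv (fun y =>
          deriv (deriv (deriv v)) y / deriv v y
            - (3 / 2) * (deriv (deriv v) y / deriv v y) ^ 2) x := by
  have hv' : ContDiff ℝ (⊤ : ℕ∞) v := hv.of_le (by simp)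
  have hc1 : ContDiff ℝ (⊤ : ℕ∞) (deriv v) := (contDiff_infty_iff_deriv.mp hv').2
  have hc2 : ContDiff ℝ (⊤ : ℕ∞) (deriv (deriv v)) := (contDiff_infty_iff_deriv.mp hc1).2
  have hc3 : ContDiff ℝ (⊤ : ℕ∞) (deriv (deriv (deriv v))) := (contDiff_infty_iff_deriv.mp hc2).2
  set v1 := deriv v with h1
  set v2 := deriv v1 with h2
  set v3 := deriv v2 with h3
  set v4 := deriv v3 with h4
  have d1 : ∀ y, DifferentiableAt ℝ v1 y := fun y => hc1.differentiable (by simp) y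
  have d2 : ∀ y, DifferentiableAt ℝ v2 y := fun y => hc2.differentiable (by simp) y
  have d3 : ∀ y, DifferentiableAt ℝ v3 y := fun y => hc3.differentiable (by simp) y
  intro x
  -- first term
  have hA : deriv (fun y => v2 y ^ 2 / v1 y ^ 3) x
      = (2 * v2 x * v3 x * v1 x ^ 3 - v2 x ^ 2 * (3 * v1 x ^ 2 * v2 x)) / (v1 x ^ 3) ^ 2 := by
    rw [deriv_fun_div ((d2 x).fun_pow 2) ((d1 x).fun_pow 3) (pow_ne_zero 3 (hne x)),
      deriv_fun_pow (d2 x) 2, deriv_fun_pow (d1 x) 3]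
    norm_num
    rfl
  -- inner derivative as a function
  have hB : deriv (fun y => v2 y / v1 y ^ 2)
      = fun y => v3 y / v1 y ^ 2 - 2 * (v2 y ^ 2 / v1 y ^ 3) := by
    funext y
    rw [deriv_fun_div (d2 y) ((d1 y).fun_pow 2) (pow_ne_zero 2 (hne y)), deriv_fun_pow (d1 y) 2]
    have h0 := hne y
    norm_num
    field_simp
    ring
  have hC : deriv (deriv (fun y => v2 y / v1 y ^ 2)) x
      = (v4 x * v1 x ^ 2 - v3 x * (2 * v1 x * v2 x)) / (v1 x ^ 2) ^ 2
        - 2 * ((2 * v2 x * v3 x * v1 x ^ 3 - v2 x ^ 2 * (3 * v1 x ^ 2 * v2 x)) / (v1 x ^ 3) ^ 2) := by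
    rw [hB]
    have dd1 : DifferentiableAt ℝ (fun y => v3 y / v1 y ^ 2) x :=
      (d3 x).div ((d1 x).pow 2) (pow_ne_zero 2 (hne x))
    have dd2 : DifferentiableAt ℝ (fun y => v2 y ^ 2 / v1 y ^ 3) x :=
      ((d2 x).pow 2).div ((d1 x).pow 3) (pow_ne_zero 3 (hne x))
    rw [deriv_fun_sub dd1 (dd2.const_mul 2), deriv_const_mul 2 dd2,
      deriv_fun_div (d3 x) ((d1 x).fun_pow 2) (pow_ne_zero 2 (hne x)),
      deriv_fun_div ((d2 x).fun_pow 2) ((d1 x).fun_pow 3) (pow_ne_zero 3 (hne x)),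
      deriv_fun_pow (d1 x) 2, deriv_fun_pow (d2 x) 2, deriv_fun_pow (d1 x) 3]
    norm_num
    rfl
  -- RHS
  have hR : deriv (fun y => v3 y / v1 y - 3 / 2 * (v2 y / v1 y) ^ 2) x
      = (v4 x * v1 x - v3 x * v2 x) / v1 x ^ 2
        - 3 / 2 * (2 * (v2 x / v1 x) * ((v3 x * v1 x - v2 x * v2 x) / v1 x ^ 2)) := by
    have dq : DifferentiableAt ℝ (fun y => v2 y / v1 y) x :=
      (d2 x).div (d1 x) (hne x)
    rw [deriv_fun_sub ((d3 x).fun_div (d1 x) (hne x)) (((dq.fun_pow 2)).const_mul _),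
      deriv_const_mul _ (dq.fun_pow 2), deriv_fun_pow dq 2,
      deriv_fun_div (d3 x) (d1 x) (hne x), deriv_fun_div (d2 x) (d1 x) (hne x)]
    norm_num
    rfl
  rw [hA, hC, hR]
  have h0 := hne x
  field_simp
  ring
end

section
/- Let v : ℝ → ℝ be smooth with v' nowhere zero, and let s := v'''/v' − (3/2)(v''/v')² be its Schwarzian derivative. Then ∂_x( (1/v') ∂_x( (1/v') ∂_x( v' s ) ) ) = −∂_x( v_{xxx}²/v_x³ − (3/2) v_{xx}⁴/v_x⁵ ) + ∂²_x( (3/2) v_{xx}³/v_x⁴ ) + ∂³_x( v_{xxx}/v_x² ); that is, the Dorfman operator J = D(1/v_x)D(1/v_x)D applied to the right-hand side v_x{v,x} of the Schwarzian KdV equation equals the variational derivative δH₂ of H₂ = (1/2)∫(−v_x^{−2} v_{xxx}² + (3/4) v_x^{−4} v_{xx}⁴)dx. -/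
set_option maxHeartbeats 4000000 in
/-- For smooth `v : ℝ → ℝ` with nowhere-vanishing derivative
and Schwarzian derivative `s := v'''/v' − (3/2)(v''/v')²`, the Dorfman operator
`J = D(1/v_x)D(1/v_x)D` applied to `v_x·s` (the right-hand side of the
Schwarzian KdV equation) equals the variational derivative
`δH₂ = −∂x(v_{xxx}²/v_x³ − (3/2)v_{xx}⁴/v_x⁵) + ∂²x((3/2)v_{xx}³/v_x⁴)
      + ∂³x(v_{xxx}/v_x²)`
of `H₂ = (1/2)∫(−v_x⁻² v_{xxx}² + (3/4) v_x⁻⁴ v_{xx}⁴)dx`. -/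
theorem dorfman_schwarzian_kdv_H2
    (v s : ℝ → ℝ) (hv : ContDiff ℝ (⊤ : ℕ∞) v) (hne : ∀ x, deriv v x ≠ 0)
    (hs : ∀ x, s x = deriv (deriv (deriv v)) x / deriv v x
        - (3 / 2) * (deriv (deriv v) x / deriv v x) ^ 2) :
    ∀ x,
      deriv (fun y => (1 / deriv v y) *
          deriv (fun z => (1 / deriv v z) *
            deriv (fun w => deriv v w * s w) z) y) x
      = -deriv (fun y =>
            (deriv (deriv (deriv v)) y) ^ 2 / (deriv v y) ^ 3
              - (3 / 2) * (deriv (deriv v) y) ^ 4 / (deriv v y) ^ 5) x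
        + deriv (deriv (fun y =>
            (3 / 2) * (deriv (deriv v) y) ^ 3 / (deriv v y) ^ 4)) x
        + deriv (deriv (deriv (fun y =>
            deriv (deriv (deriv v)) y / (deriv v y) ^ 2))) x := by
  have hv' : ContDiff ℝ ((⊤ : ℕ∞) : WithTop ℕ∞) v := hv.of_le (by simp)
  have h1 : ContDiff ℝ ((⊤ : ℕ∞) : WithTop ℕ∞) (deriv v) := (contDiff_infty_iff_deriv.mp hv').2
  have h2 : ContDiff ℝ ((⊤ : ℕ∞) : WithTop ℕ∞) (deriv (deriv v)) := (contDiff_infty_iff_deriv.mp h1).2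
  have h3 : ContDiff ℝ ((⊤ : ℕ∞) : WithTop ℕ∞) (deriv (deriv (deriv v))) := (contDiff_infty_iff_deriv.mp h2).2
  have h4 : ContDiff ℝ ((⊤ : ℕ∞) : WithTop ℕ∞) (deriv (deriv (deriv (deriv v)))) := (contDiff_infty_iff_deriv.mp h3).2
  have h5 : ContDiff ℝ ((⊤ : ℕ∞) : WithTop ℕ∞) (deriv (deriv (deriv (deriv (deriv v))))) := (contDiff_infty_iff_deriv.mp h4).2
  have hd1 : Differentiable ℝ (deriv v) := (contDiff_infty_iff_deriv.mp h1).1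
  have hd2 : Differentiable ℝ (deriv (deriv v)) := (contDiff_infty_iff_deriv.mp h2).1
  have hd3 : Differentiable ℝ (deriv (deriv (deriv v))) := (contDiff_infty_iff_deriv.mp h3).1
  have hd4 : Differentiable ℝ (deriv (deriv (deriv (deriv v)))) := (contDiff_infty_iff_deriv.mp h4).1
  have hd5 : Differentiable ℝ (deriv (deriv (deriv (deriv (deriv v))))) := (contDiff_infty_iff_deriv.mp h5).1
  intro x
  have e0 : (fun w => deriv v w * s w) = (fun w => (((-3 : ℝ) / 2) * deriv (deriv v) w ^ 2 + (1 : ℝ) * deriv v w ^ 1 * deriv (deriv (deriv v)) w ^ 1) / deriv v w) := by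
    funext w
    rw [hs w]
    have hw := hne w
    field_simp
    ring
  have H1 : ∀ y : ℝ, HasDerivAt (fun y => (((-3 : ℝ) / 2) * deriv (deriv v) y ^ 2 + (1 : ℝ) * deriv v y ^ 1 * deriv (deriv (deriv v)) y ^ 1) / deriv v y) ((((3 : ℝ) / 2) * deriv (deriv v) y ^ 3 + (-3 : ℝ) * deriv v y ^ 1 * deriv (deriv v) y ^ 1 * deriv (deriv (deriv v)) y ^ 1 + (1 : ℝ) * deriv v y ^ 2 * deriv (deriv (deriv (deriv v))) y ^ 1) / deriv v y ^ 2) y := by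
    intro y
    refine HasDerivAt.congr_deriv (((((((hd2 y).hasDerivAt).pow 2).const_mul ((-3 : ℝ) / 2)).add (((((hd1 y).hasDerivAt).pow 1).const_mul (1 : ℝ)).mul (((hd3 y).hasDerivAt).pow 1))).div ((hd1 y).hasDerivAt) (hne y))) ?_
    have hy := hne y
    simp only [Pi.add_apply, Pi.mul_apply, Pi.pow_apply, Pi.sub_apply, Pi.div_apply]
    field_simp
    ring
  have e1 : deriv (fun w => deriv v w * s w) = (fun y => (((3 : ℝ) / 2) * deriv (deriv v) y ^ 3 + (-3 : ℝ) * deriv v y ^ 1 * deriv (deriv v) y ^ 1 * deriv (deriv (deriv v)) y ^ 1 + (1 : ℝ) * deriv v y ^ 2 * deriv (deriv (deriv (deriv v))) y ^ 1) / deriv v y ^ 2) := by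
    rw [e0]
    funext y
    exact (H1 y).deriv
  have H2 : ∀ y : ℝ, HasDerivAt (fun y => 1 / deriv v y * ((((3 : ℝ) / 2) * deriv (deriv v) y ^ 3 + (-3 : ℝ) * deriv v y ^ 1 * deriv (deriv v) y ^ 1 * deriv (deriv (deriv v)) y ^ 1 + (1 : ℝ) * deriv v y ^ 2 * deriv (deriv (deriv (deriv v))) y ^ 1) / deriv v y ^ 2)) ((((-9 : ℝ) / 2) * deriv (deriv v) y ^ 4 + ((21 : ℝ) / 2) * deriv v y ^ 1 * deriv (deriv v) y ^ 2 * deriv (deriv (deriv v)) y ^ 1 + (-3 : ℝ) * deriv v y ^ 2 * deriv (deriv (deriv v)) y ^ 2 + (-4 : ℝ) * deriv v y ^ 2 * deriv (deriv v) y ^ 1 * deriv (deriv (deriv (deriv v))) y ^ 1 + (1 : ℝ) * deriv v y ^ 3 * deriv (deriv (deriv (deriv (deriv v)))) y ^ 1) / deriv v y ^ 4) y := by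
    intro y
    refine HasDerivAt.congr_deriv ((((hasDerivAt_const y (1 : ℝ)).div ((hd1 y).hasDerivAt) (hne y)).mul ((((((((hd2 y).hasDerivAt).pow 3).const_mul ((3 : ℝ) / 2)).add ((((((hd1 y).hasDerivAt).pow 1).const_mul (-3 : ℝ)).mul (((hd2 y).hasDerivAt).pow 1)).mul (((hd3 y).hasDerivAt).pow 1))).add (((((hd1 y).hasDerivAt).pow 2).const_mul (1 : ℝ)).mul (((hd4 y).hasDerivAt).pow 1))).div (((hd1 y).hasDerivAt).pow 2) (pow_ne_zero 2 (hne y)))))) ?_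
    have hy := hne y
    simp only [Pi.add_apply, Pi.mul_apply, Pi.pow_apply, Pi.sub_apply, Pi.div_apply]
    field_simp
    ring
  have e2 : deriv (fun z => 1 / deriv v z * ((((3 : ℝ) / 2) * deriv (deriv v) z ^ 3 + (-3 : ℝ) * deriv v z ^ 1 * deriv (deriv v) z ^ 1 * deriv (deriv (deriv v)) z ^ 1 + (1 : ℝ) * deriv v z ^ 2 * deriv (deriv (deriv (deriv v))) z ^ 1) / deriv v z ^ 2)) = (fun y => (((-9 : ℝ) / 2) * deriv (deriv v) y ^ 4 + ((21 : ℝ) / 2) * deriv v y ^ 1 * deriv (deriv v) y ^ 2 * deriv (deriv (deriv v)) y ^ 1 + (-3 : ℝ) * deriv v y ^ 2 * deriv (deriv (deriv v)) y ^ 2 + (-4 : ℝ) * deriv v y ^ 2 * deriv (deriv v) y ^ 1 * deriv (deriv (deriv (deriv v))) y ^ 1 + (1 : ℝ) * deriv v y ^ 3 * deriv (deriv (deriv (deriv (deriv v)))) y ^ 1) / deriv v y ^ 4) := by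
    funext y
    exact (H2 y).deriv
  have H3 : ∀ y : ℝ, HasDerivAt (fun y => 1 / deriv v y * ((((-9 : ℝ) / 2) * deriv (deriv v) y ^ 4 + ((21 : ℝ) / 2) * deriv v y ^ 1 * deriv (deriv v) y ^ 2 * deriv (deriv (deriv v)) y ^ 1 + (-3 : ℝ) * deriv v y ^ 2 * deriv (deriv (deriv v)) y ^ 2 + (-4 : ℝ) * deriv v y ^ 2 * deriv (deriv v) y ^ 1 * deriv (deriv (deriv (deriv v))) y ^ 1 + (1 : ℝ) * deriv v y ^ 3 * deriv (deriv (deriv (deriv (deriv v)))) y ^ 1) / deriv v y ^ 4)) ((((45 : ℝ) / 2) * deriv (deriv v) y ^ 5 + (-60 : ℝ) * deriv v y ^ 1 * deriv (deriv v) y ^ 3 * deriv (deriv (deriv v)) y ^ 1 + (30 : ℝ) * deriv v y ^ 2 * deriv (deriv v) y ^ 1 * deriv (deriv (deriv v)) y ^ 2 + ((45 : ℝ) / 2) * deriv v y ^ 2 * deriv (deriv v) y ^ 2 * deriv (deriv (deriv (deriv v))) y ^ 1 + (-10 : ℝ) * deriv v y ^ 3 * deriv (deriv (deriv v)) y ^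 1 * deriv (deriv (deriv (deriv v))) y ^ 1 + (-6 : ℝ) * deriv v y ^ 3 * deriv (deriv v) y ^ 1 * deriv (deriv (deriv (deriv (deriv v)))) y ^ 1 + (1 : ℝ) * deriv v y ^ 4 * deriv (deriv (deriv (deriv (deriv (deriv v))))) y ^ 1) / deriv v y ^ 6) y := by
    intro y
    refine HasDerivAt.congr_deriv ((((hasDerivAt_const y (1 : ℝ)).div ((hd1 y).hasDerivAt) (hne y)).mul ((((((((((hd2 y).hasDerivAt).pow 4).const_mul ((-9 : ℝ) / 2)).add ((((((hd1 y).hasDerivAt).pow 1).const_mul ((21 : ℝ) / 2)).mul (((hd2 y).hasDerivAt).pow 2)).mul (((hd3 y).hasDerivAt).pow 1))).add (((((hd1 y).hasDerivAt).pow 2).const_mul (-3 : ℝ)).mul (((hd3 y).hasDerivAt).pow 2))).add ((((((hd1 y).hasDerivAt).pow 2).const_mul (-4 : ℝ)).mul (((hd2 y).hasDerivAt).pow 1)).mul (((hd4 y).hasDerivAt).pow 1))).add (((((hd1 y).hasDerivAt).pow 3).const_mul (1 : ℝ)).mul (((hd5 y).hasDerivAt).pow 1))).div (((hd1 y).hasDerivAt).pow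 4) (pow_ne_zero 4 (hne y)))))) ?_
    have hy := hne y
    simp only [Pi.add_apply, Pi.mul_apply, Pi.pow_apply, Pi.sub_apply, Pi.div_apply]
    field_simp
    ring
  have HR1 : ∀ y : ℝ, HasDerivAt (fun y => (deriv (deriv (deriv v)) y) ^ 2 / (deriv v y) ^ 3 - (3 / 2) * (deriv (deriv v) y) ^ 4 / (deriv v y) ^ 5) ((((15 : ℝ) / 2) * deriv (deriv v) y ^ 5 + (-6 : ℝ) * deriv v y ^ 1 * deriv (deriv v) y ^ 3 * deriv (deriv (deriv v)) y ^ 1 + (-3 : ℝ) * deriv v y ^ 2 * deriv (deriv v) y ^ 1 * deriv (deriv (deriv v)) y ^ 2 + (2 : ℝ) * deriv v y ^ 3 * deriv (deriv (deriv v)) y ^ 1 * deriv (deriv (deriv (deriv v))) y ^ 1) / deriv v y ^ 6) y := by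
    intro y
    refine HasDerivAt.congr_deriv ((((((hd3 y).hasDerivAt).pow 2).div (((hd1 y).hasDerivAt).pow 3) (pow_ne_zero 3 (hne y))).sub (((((hd2 y).hasDerivAt).pow 4).const_mul ((3 : ℝ)/2)).div (((hd1 y).hasDerivAt).pow 5) (pow_ne_zero 5 (hne y))))) ?_
    have hy := hne y
    simp only [Pi.add_apply, Pi.mul_apply, Pi.pow_apply, Pi.sub_apply, Pi.div_apply]
    field_simp
    ring
  have HR2a : ∀ y : ℝ, HasDerivAt (fun y => (3 / 2) * (deriv (deriv v) y) ^ 3 / (deriv v y) ^ 4) (((-6 : ℝ) * deriv (deriv v) y ^ 4 + ((9 : ℝ) / 2) * deriv v y ^ 1 * deriv (deriv v) y ^ 2 * deriv (deriv (deriv v)) y ^ 1) / deriv v y ^ 5) y := by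
    intro y
    refine HasDerivAt.congr_deriv ((((((hd2 y).hasDerivAt).pow 3).const_mul ((3 : ℝ)/2)).div (((hd1 y).hasDerivAt).pow 4) (pow_ne_zero 4 (hne y)))) ?_
    have hy := hne y
    simp only [Pi.add_apply, Pi.mul_apply, Pi.pow_apply, Pi.sub_apply, Pi.div_apply]
    field_simp
    ring
  have e3 : deriv (fun y => (3 / 2) * (deriv (deriv v) y) ^ 3 / (deriv v y) ^ 4) = (fun y => ((-6 : ℝ) * deriv (deriv v) y ^ 4 + ((9 : ℝ) / 2) * deriv v y ^ 1 * deriv (deriv v) y ^ 2 * deriv (deriv (deriv v)) y ^ 1) / deriv v y ^ 5) := by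
    funext y
    exact (HR2a y).deriv
  have HR2b : ∀ y : ℝ, HasDerivAt (fun y => ((-6 : ℝ) * deriv (deriv v) y ^ 4 + ((9 : ℝ) / 2) * deriv v y ^ 1 * deriv (deriv v) y ^ 2 * deriv (deriv (deriv v)) y ^ 1) / deriv v y ^ 5) (((30 : ℝ) * deriv (deriv v) y ^ 5 + (-42 : ℝ) * deriv v y ^ 1 * deriv (deriv v) y ^ 3 * deriv (deriv (deriv v)) y ^ 1 + (9 : ℝ) * deriv v y ^ 2 * deriv (deriv v) y ^ 1 * deriv (deriv (deriv v)) y ^ 2 + ((9 : ℝ) / 2) * deriv v y ^ 2 * deriv (deriv v) y ^ 2 * deriv (deriv (deriv (deriv v))) y ^ 1) / deriv v y ^ 6) y := by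
    intro y
    refine HasDerivAt.congr_deriv (((((((hd2 y).hasDerivAt).pow 4).const_mul (-6 : ℝ)).add ((((((hd1 y).hasDerivAt).pow 1).const_mul ((9 : ℝ) / 2)).mul (((hd2 y).hasDerivAt).pow 2)).mul (((hd3 y).hasDerivAt).pow 1))).div (((hd1 y).hasDerivAt).pow 5) (pow_ne_zero 5 (hne y)))) ?_
    have hy := hne y
    simp only [Pi.add_apply, Pi.mul_apply, Pi.pow_apply, Pi.sub_apply, Pi.div_apply]
    field_simp
    ring
  have HR3a : ∀ y : ℝ, HasDerivAt (fun y => deriv (deriv (deriv v)) y / (deriv v y) ^ 2) (((-2 : ℝ) * deriv (deriv v) y ^ 1 * deriv (deriv (deriv v)) y ^ 1 + (1 : ℝ) * deriv v y ^ 1 * deriv (deriv (deriv (deriv v))) y ^ 1) / deriv v y ^ 3) y := by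
    intro y
    refine HasDerivAt.congr_deriv ((((hd3 y).hasDerivAt).div (((hd1 y).hasDerivAt).pow 2) (pow_ne_zero 2 (hne y)))) ?_
    have hy := hne y
    field_simp
    ring
  have e4 : deriv (fun y => deriv (deriv (deriv v)) y / (deriv v y) ^ 2) = (fun y => ((-2 : ℝ) * deriv (deriv v) y ^ 1 * deriv (deriv (deriv v)) y ^ 1 + (1 : ℝ) * deriv v y ^ 1 * deriv (deriv (deriv (deriv v))) y ^ 1) / deriv v y ^ 3) := by
    funext y
    exact (HR3a y).deriv
  have HR3b : ∀ y : ℝ, HasDerivAt (fun y => ((-2 : ℝ) * deriv (deriv v) y ^ 1 * deriv (deriv (deriv v)) y ^ 1 + (1 : ℝ) * deriv v y ^ 1 * deriv (deriv (deriv (deriv v))) y ^ 1) / deriv v y ^ 3) (((6 : ℝ) * deriv (deriv v) y ^ 2 * deriv (deriv (deriv v)) y ^ 1 + (-2 : ℝ) * deriv v y ^ 1 * deriv (deriv (deriv v)) y ^ 2 + (-4 : ℝ) * deriv v y ^ 1 * deriv (deriv v) y ^ 1 * deriv (deriv (deriv (deriv v))) y ^ 1 + (1 : ℝ) * deriv v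 y ^ 2 * deriv (deriv (deriv (deriv (deriv v)))) y ^ 1) / deriv v y ^ 4) y := by
    intro y
    refine HasDerivAt.congr_deriv ((((((((hd2 y).hasDerivAt).pow 1).const_mul (-2 : ℝ)).mul (((hd3 y).hasDerivAt).pow 1)).add (((((hd1 y).hasDerivAt).pow 1).const_mul (1 : ℝ)).mul (((hd4 y).hasDerivAt).pow 1))).div (((hd1 y).hasDerivAt).pow 3) (pow_ne_zero 3 (hne y)))) ?_
    have hy := hne y
    simp only [Pi.add_apply, Pi.mul_apply, Pi.pow_apply, Pi.sub_apply, Pi.div_apply]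
    field_simp
    ring
  have e5 : deriv (fun y => ((-2 : ℝ) * deriv (deriv v) y ^ 1 * deriv (deriv (deriv v)) y ^ 1 + (1 : ℝ) * deriv v y ^ 1 * deriv (deriv (deriv (deriv v))) y ^ 1) / deriv v y ^ 3) = (fun y => ((6 : ℝ) * deriv (deriv v) y ^ 2 * deriv (deriv (deriv v)) y ^ 1 + (-2 : ℝ) * deriv v y ^ 1 * deriv (deriv (deriv v)) y ^ 2 + (-4 : ℝ) * deriv v y ^ 1 * deriv (deriv v) y ^ 1 * deriv (deriv (deriv (deriv v))) y ^ 1 + (1 : ℝ) * deriv v y ^ 2 * deriv (deriv (deriv (deriv (deriv v)))) y ^ 1) / deriv v y ^ 4) := by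
    funext y
    exact (HR3b y).deriv
  have HR3c : ∀ y : ℝ, HasDerivAt (fun y => ((6 : ℝ) * deriv (deriv v) y ^ 2 * deriv (deriv (deriv v)) y ^ 1 + (-2 : ℝ) * deriv v y ^ 1 * deriv (deriv (deriv v)) y ^ 2 + (-4 : ℝ) * deriv v y ^ 1 * deriv (deriv v) y ^ 1 * deriv (deriv (deriv (deriv v))) y ^ 1 + (1 : ℝ) * deriv v y ^ 2 * deriv (deriv (deriv (deriv (deriv v)))) y ^ 1) / deriv v y ^ 4) (((-24 : ℝ) * deriv (deriv v) y ^ 3 * deriv (deriv (deriv v)) y ^ 1 + (18 : ℝ) * deriv v y ^ 1 * deriv (deriv v) y ^ 1 * deriv (deriv (deriv v)) y ^ 2 + (18 : ℝ) * deriv v y ^ 1 * deriv (deriv v) y ^ 2 * deriv (deriv (deriv (deriv v))) y ^ 1 + (-8 : ℝ) * deriv v y ^ 2 * deriv (deriv (deriv v)) y ^ 1 * deriv (deriv (deriv (deriv v))) y ^ 1 + (-6 : ℝ) * deriv v y ^ 2 * deriv (deriv v) y ^ 1 * deriv (deriv (deriv (deriv (deriv v)))) y ^ 1 + (1 : ℝ)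 * deriv v y ^ 3 * deriv (deriv (deriv (deriv (deriv (deriv v))))) y ^ 1) / deriv v y ^ 5) y := by
    intro y
    refine HasDerivAt.congr_deriv ((((((((((hd2 y).hasDerivAt).pow 2).const_mul (6 : ℝ)).mul (((hd3 y).hasDerivAt).pow 1)).add (((((hd1 y).hasDerivAt).pow 1).const_mul (-2 : ℝ)).mul (((hd3 y).hasDerivAt).pow 2))).add ((((((hd1 y).hasDerivAt).pow 1).const_mul (-4 : ℝ)).mul (((hd2 y).hasDerivAt).pow 1)).mul (((hd4 y).hasDerivAt).pow 1))).add (((((hd1 y).hasDerivAt).pow 2).const_mul (1 : ℝ)).mul (((hd5 y).hasDerivAt).pow 1))).div (((hd1 y).hasDerivAt).pow 4) (pow_ne_zero 4 (hne y)))) ?_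
    have hy := hne y
    simp only [Pi.add_apply, Pi.mul_apply, Pi.pow_apply, Pi.sub_apply, Pi.div_apply]
    field_simp
    ring
  simp only [e1]
  simp only [e2]
  rw [(H3 x).deriv, (HR1 x).deriv]
  rw [e3, (HR2b x).deriv]
  rw [e4, e5, (HR3c x).deriv]
  have hx := hne x
  field_simp
  ring
end

section
/- Let u, φ : ℝ → ℝ be smooth with u' > 0 everywhere, set ℓ := log u', and let Φ be any antiderivative of u'·φ. Then u'·( −ℓ'' φ + ℓ' φ' − φ'' ) − ℓ''' Φ + ∂²_x( u' φ + ℓ' Φ ) = 2 u''' φ + 4 u'' φ'. Equivalently, the coefficient of ε² in the deformed Sokolov operator S(ε) = M*(u_x − (ε²/24)(log u_x)_{xxx}) D⁻¹ (u_x − (ε²/24)(log u_x)_{xxx}) M applied to φ equals (1/12)(∂_x(u_{xx} φ) + u_{xx} φ') = (1/12)(u_{xxx} φ + 2 u_{xx} φ'), so that S(ε) = u_x D⁻¹ u_x + (ε²/12)[D u_{xx} + u_{xx} D] + O(ε⁴). -/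
open scoped ContDiff


/-- Let `u, φ : ℝ → ℝ` be smooth with `u' > 0`, set
`ℓ := log u'`, and let `Φ` be any antiderivative of `u'·φ`. Then
`u'·(−ℓ'' φ + ℓ' φ' − φ'') − ℓ''' Φ + ∂²x(u' φ + ℓ' Φ) = 2 u''' φ + 4 u'' φ'`.
This says that the `ε²`-coefficient of the deformed Sokolov operator
`S(ε) = M*(u_x − (ε²/24)(log u_x)_{xxx}) D⁻¹ (u_x − (ε²/24)(log u_x)_{xxx}) M`
applied to `φ` equals `(1/12)(u_{xxx} φ + 2 u_{xx} φ')`, i.e.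
`S(ε) = u_x D⁻¹ u_x + (ε²/12)[D u_{xx} + u_{xx} D] + O(ε⁴)`. -/
theorem deformed_sokolov_epsilon_squared_term
    (u φ Φ ℓ : ℝ → ℝ)
    (hu : ContDiff ℝ (⊤ : ℕ∞) u) (hφ : ContDiff ℝ (⊤ : ℕ∞) φ)
    (hpos : ∀ x, 0 < deriv u x)
    (hℓ : ∀ x, ℓ x = Real.log (deriv u x))
    (hΦ : ∀ x, HasDerivAt Φ (deriv u x * φ x) x) :
    ∀ x,
      deriv u x *
          (-(deriv (deriv ℓ) x) * φ x + deriv ℓ x * deriv φ x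
            - deriv (deriv φ) x)
        - deriv (deriv (deriv ℓ)) x * Φ x
        + deriv (deriv (fun y => deriv u y * φ y + deriv ℓ y * Φ y)) x
      = 2 * deriv (deriv (deriv u)) x * φ x
        + 4 * deriv (deriv u) x * deriv φ x := by
  intro x
  set v := deriv u with hv_def
  set a := deriv v with ha_def
  set b := deriv a with hb_def
  have hne : ∀ y, v y ≠ 0 := fun y => (hpos y).ne'
  have h1 : (∞ : WithTop ℕ∞) ≠ 0 := by simp
  have hu' : ContDiff ℝ ∞ u := hu.of_le (by simp)
  have hφ' : ContDiff ℝ ∞ φ := hφ.of_le (by simp)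
  have hv : ContDiff ℝ ∞ v := (contDiff_infty_iff_deriv.mp hu').2
  have ha : ContDiff ℝ ∞ a := (contDiff_infty_iff_deriv.mp hv).2
  have hb : ContDiff ℝ ∞ b := (contDiff_infty_iff_deriv.mp ha).2
  have hφ1 : ContDiff ℝ ∞ (deriv φ) := (contDiff_infty_iff_deriv.mp hφ').2
  -- derivatives exist everywhere
  have hvD : ∀ y, HasDerivAt v (a y) y := fun y =>
    (hv.differentiable h1 y).hasDerivAt
  have haD : ∀ y, HasDerivAt a (b y) y := fun y =>
    (ha.differentiable h1 y).hasDerivAt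
  have hφD : ∀ y, HasDerivAt φ (deriv φ y) y := fun y =>
    (hφ'.differentiable h1 y).hasDerivAt
  have hφ1D : ∀ y, HasDerivAt (deriv φ) (deriv (deriv φ) y) y := fun y =>
    (hφ1.differentiable h1 y).hasDerivAt
  -- derivative of ℓ
  have hℓfun : ℓ = fun y => Real.log (v y) := funext hℓ
  have hℓD : ∀ y, HasDerivAt ℓ (a y / v y) y := by
    intro y
    rw [hℓfun]
    have := (Real.hasDerivAt_log (hne y)).comp y (hvD y)
    exact this.congr_deriv (by rw [div_eq_mul_inv, mul_comm])
  have hL1 : deriv ℓ = fun y => a y / v y := funext fun y => (hℓD y).deriv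
  -- the quotient a / v is smooth
  have hq : ContDiff ℝ ∞ (fun y => a y / v y) := ha.div hv hne
  have hq1 : ContDiff ℝ ∞ (deriv (fun y => a y / v y)) :=
    (contDiff_infty_iff_deriv.mp hq).2
  have hL2fun : deriv (deriv ℓ) = deriv (fun y => a y / v y) := by rw [hL1]
  have hL3fun : deriv (deriv (deriv ℓ))
      = deriv (deriv (fun y => a y / v y)) := by rw [hL2fun]
  have hL1D : ∀ y, HasDerivAt (deriv ℓ) (deriv (deriv ℓ) y) y := by
    intro y
    rw [hL1]
    exact (hq.differentiable h1 y).hasDerivAt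
  have hL2D : ∀ y, HasDerivAt (deriv (deriv ℓ)) (deriv (deriv (deriv ℓ)) y) y := by
    intro y
    rw [hL2fun]
    exact (hq1.differentiable h1 y).hasDerivAt
  -- first derivative of the bracket
  set f := fun y => v y * φ y + deriv ℓ y * Φ y with hf_def
  have hfD : ∀ y, HasDerivAt f
      (2 * a y * φ y + v y * deriv φ y + deriv (deriv ℓ) y * Φ y) y := by
    intro y
    have h := ((hvD y).mul (hφD y)).add ((hL1D y).mul (hΦ y))
    refine h.congr_deriv ?_
    have hc : deriv ℓ y * (v y * φ y) = a y * φ y := by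
      rw [(hℓD y).deriv]
      field_simp [hne y]
    rw [hc]
    ring
  have hf1 : deriv f = fun y =>
      2 * a y * φ y + v y * deriv φ y + deriv (deriv ℓ) y * Φ y :=
    funext fun y => (hfD y).deriv
  -- second derivative of the bracket
  have hf2D : HasDerivAt (deriv f)
      ((2 * b x * φ x + 2 * a x * deriv φ x)
        + (a x * deriv φ x + v x * deriv (deriv φ) x)
        + (deriv (deriv (deriv ℓ)) x * Φ x
            + deriv (deriv ℓ) x * (v x * φ x))) x := by
    rw [hf1]
    exact ((((haD x).const_mul 2).mul (hφD x)).add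
              ((hvD x).mul (hφ1D x))).add ((hL2D x).mul (hΦ x)) |>.congr_deriv
      (by ring)
  have hf2 : deriv (deriv f) x =
      (2 * b x * φ x + 2 * a x * deriv φ x)
        + (a x * deriv φ x + v x * deriv (deriv φ) x)
        + (deriv (deriv (deriv ℓ)) x * Φ x
            + deriv (deriv ℓ) x * (v x * φ x)) := hf2D.deriv
  rw [hf2, (hℓD x).deriv]
  field_simp [hne x]
  ring
end

section
/- Let m, h : ℝ → ℝ be smooth with m' nowhere zero, and let s := m'''/m' − (3/2)(m''/m')² be the Schwarzian derivative of m. Then m' · ∂_x( (1/m') ∂_x( (1/m') ∂_x( m' h ) ) ) = h''' + 2 s h' + s' h. In other words, the third-order operator D³ + 2{m,x}D + ({m,x})_x factorizes as m_x ∘ J ∘ m_x, where J = D(1/m_x)D(1/m_x)D is the Dorfman operator. -/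
open scoped ContDiff


/-- For smooth `m, h : ℝ → ℝ` with `m'` nowhere zero and
Schwarzian derivative `s := m'''/m' − (3/2)(m''/m')²`, one has the
factorization identity
`m' · ∂x((1/m') ∂x((1/m') ∂x(m' h))) = h''' + 2 s h' + s' h`,
i.e. the third-order operator `D³ + 2{m,x}D + ({m,x})_x` factorizes as
`m_x ∘ J ∘ m_x`, with `J = D(1/m_x)D(1/m_x)D` the Dorfman operator. -/
theorem dorfman_factorization
    (m h s : ℝ → ℝ)
    (hm : ContDiff ℝ (⊤ : ℕ∞) m) (hh : ContDiff ℝ (⊤ : ℕ∞) h)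
    (hne : ∀ x, deriv m x ≠ 0)
    (hs : ∀ x, s x = deriv (deriv (deriv m)) x / deriv m x
        - (3 / 2) * (deriv (deriv m) x / deriv m x) ^ 2) :
    ∀ x,
      deriv m x *
        deriv (fun y => (1 / deriv m y) *
          deriv (fun z => (1 / deriv m z) *
            deriv (fun w => deriv m w * h w) z) y) x
      = deriv (deriv (deriv h)) x + 2 * s x * deriv h x + deriv s x * h x := by
  intro x
  have hm0 : ContDiff ℝ ∞ m := hm.of_le (by simp)
  have hh0 : ContDiff ℝ ∞ h := hh.of_le (by simp)
  have hm1 : ContDiff ℝ ∞ (deriv m) := (contDiff_infty_iff_deriv.mp hm0).2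
  have hm2 : ContDiff ℝ ∞ (deriv (deriv m)) := (contDiff_infty_iff_deriv.mp hm1).2
  have hm3 : ContDiff ℝ ∞ (deriv (deriv (deriv m))) := (contDiff_infty_iff_deriv.mp hm2).2
  have hh1 : ContDiff ℝ ∞ (deriv h) := (contDiff_infty_iff_deriv.mp hh0).2
  have hh2 : ContDiff ℝ ∞ (deriv (deriv h)) := (contDiff_infty_iff_deriv.mp hh1).2
  have dh : Differentiable ℝ h := (contDiff_infty_iff_deriv.mp hh0).1
  have dh1 : Differentiable ℝ (deriv h) := (contDiff_infty_iff_deriv.mp hh1).1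
  have dh2 : Differentiable ℝ (deriv (deriv h)) := (contDiff_infty_iff_deriv.mp hh2).1
  have dm1 : Differentiable ℝ (deriv m) := (contDiff_infty_iff_deriv.mp hm1).1
  have dm2 : Differentiable ℝ (deriv (deriv m)) := (contDiff_infty_iff_deriv.mp hm2).1
  have dm3 : Differentiable ℝ (deriv (deriv (deriv m))) := (contDiff_infty_iff_deriv.mp hm3).1
  -- step 1 : innermost derivative
  have e1 : deriv (fun w => deriv m w * h w)
      = fun z => deriv (deriv m) z * h z + deriv m z * deriv h z := by
    funext z; exact deriv_mul (dm1 z) (dh z)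
  -- the second layer, as a quotient
  have e2 : (fun z => (1 / deriv m z) * deriv (fun w => deriv m w * h w) z)
      = fun z => (deriv (deriv m) z * h z + deriv m z * deriv h z) / deriv m z := by
    funext z; rw [e1, one_div_mul_eq_div]
  have dN1 : Differentiable ℝ (fun z => deriv (deriv m) z * h z + deriv m z * deriv h z) :=
    (dm2.mul dh).add (dm1.mul dh1)
  have e3 : deriv (fun z => (deriv (deriv m) z * h z + deriv m z * deriv h z) / deriv m z)
      = fun z => ((deriv (deriv (deriv m)) z * h z + 2 * deriv (deriv m) z * deriv h z
          + deriv m z * deriv (deriv h) z) * deriv m z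
          - (deriv (deriv m) z * h z + deriv m z * deriv h z) * deriv (deriv m) z)
          / deriv m z ^ 2 := by
    funext z
    rw [deriv_fun_div (dN1 z) (dm1 z) (hne z), deriv_fun_add ((dm2 z).fun_mul (dh z)) ((dm1 z).fun_mul (dh1 z)),
      deriv_fun_mul (dm2 z) (dh z), deriv_fun_mul (dm1 z) (dh1 z)]
    ring
  -- the third layer, as a quotient by `(deriv m)^3`
  have e4 : (fun y => (1 / deriv m y) *
        deriv (fun z => (1 / deriv m z) * deriv (fun w => deriv m w * h w) z) y)
      = fun y => ((deriv (deriv (deriv m)) y * h y + 2 * deriv (deriv m) y * deriv h y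
          + deriv m y * deriv (deriv h) y) * deriv m y
          - (deriv (deriv m) y * h y + deriv m y * deriv h y) * deriv (deriv m) y)
          / deriv m y ^ 3 := by
    funext y
    rw [e2, e3, one_div_mul_eq_div, div_div]
    ring_nf
  have dA : Differentiable ℝ (fun y => (deriv (deriv (deriv m)) y * h y
      + 2 * deriv (deriv m) y * deriv h y + deriv m y * deriv (deriv h) y) * deriv m y
      - (deriv (deriv m) y * h y + deriv m y * deriv h y) * deriv (deriv m) y) :=
    ((((dm3.mul dh).add ((differentiable_const 2 |>.mul dm2).mul dh1)).add
      (dm1.mul dh2)).mul dm1).sub (((dm2.mul dh).add (dm1.mul dh1)).mul dm2)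
  have dP : Differentiable ℝ (fun y => deriv (deriv (deriv m)) y * h y
      + 2 * deriv (deriv m) y * deriv h y + deriv m y * deriv (deriv h) y) :=
    ((dm3.mul dh).add (((differentiable_const 2).mul dm2).mul dh1)).add (dm1.mul dh2)
  have dQ : Differentiable ℝ (fun y => deriv (deriv m) y * h y + deriv m y * deriv h y) :=
    (dm2.mul dh).add (dm1.mul dh1)
  have hP : deriv (fun y => deriv (deriv (deriv m)) y * h y
      + 2 * deriv (deriv m) y * deriv h y + deriv m y * deriv (deriv h) y) x
      = (deriv (deriv (deriv (deriv m))) x * h x + deriv (deriv (deriv m)) x * deriv h x)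
        + (2 * deriv (deriv (deriv m)) x * deriv h x + 2 * deriv (deriv m) x * deriv (deriv h) x)
        + (deriv (deriv m) x * deriv (deriv h) x + deriv m x * deriv (deriv (deriv h)) x) := by
    rw [deriv_fun_add ((dm3.fun_mul dh x).fun_add (((differentiable_const 2).fun_mul dm2).fun_mul dh1 x)) (dm1.fun_mul dh2 x),
      deriv_fun_add (dm3.fun_mul dh x) (((differentiable_const 2).fun_mul dm2).fun_mul dh1 x),
      deriv_fun_mul (dm3 x) (dh x), deriv_fun_mul (dm1 x) (dh2 x),
      deriv_fun_mul (((differentiable_const 2).fun_mul dm2) x) (dh1 x),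
      deriv_const_mul 2 (dm2 x)]
  have hQ : deriv (fun y => deriv (deriv m) y * h y + deriv m y * deriv h y) x
      = (deriv (deriv (deriv m)) x * h x + deriv (deriv m) x * deriv h x)
        + (deriv (deriv m) x * deriv h x + deriv m x * deriv (deriv h) x) := by
    rw [deriv_fun_add (dm2.fun_mul dh x) (dm1.fun_mul dh1 x), deriv_fun_mul (dm2 x) (dh x),
      deriv_fun_mul (dm1 x) (dh1 x)]
  have hA : deriv (fun y => (deriv (deriv (deriv m)) y * h y
      + 2 * deriv (deriv m) y * deriv h y + deriv m y * deriv (deriv h) y) * deriv m y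
      - (deriv (deriv m) y * h y + deriv m y * deriv h y) * deriv (deriv m) y) x
      = (deriv (fun y => deriv (deriv (deriv m)) y * h y
          + 2 * deriv (deriv m) y * deriv h y + deriv m y * deriv (deriv h) y) x * deriv m x
        + (deriv (deriv (deriv m)) x * h x + 2 * deriv (deriv m) x * deriv h x
            + deriv m x * deriv (deriv h) x) * deriv (deriv m) x)
        - (deriv (fun y => deriv (deriv m) y * h y + deriv m y * deriv h y) x * deriv (deriv m) x
          + (deriv (deriv m) x * h x + deriv m x * deriv h x) * deriv (deriv (deriv m)) x) := by
    rw [deriv_fun_sub (dP.fun_mul dm1 x) (dQ.fun_mul dm2 x), deriv_fun_mul (dP x) (dm1 x),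
      deriv_fun_mul (dQ x) (dm2 x)]
  -- derivative of `s`
  have hsf : s = fun y => deriv (deriv (deriv m)) y / deriv m y
      - (3 / 2) * (deriv (deriv m) y / deriv m y) ^ 2 := funext hs
  have hds : deriv s x
      = (deriv (deriv (deriv (deriv m))) x * deriv m x
          - deriv (deriv (deriv m)) x * deriv (deriv m) x) / deriv m x ^ 2
        - 3 / 2 * ((2 : ℕ) * (deriv (deriv m) x / deriv m x) ^ 1 *
            ((deriv (deriv (deriv m)) x * deriv m x
              - deriv (deriv m) x * deriv (deriv m) x) / deriv m x ^ 2)) := by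
    rw [hsf, deriv_fun_sub ((dm3 x).fun_div (dm1 x) (hne x))
        (((dm2.fun_div dm1 (fun y => hne y)).fun_pow 2).const_mul (3/2) x),
      deriv_fun_div (dm3 x) (dm1 x) (hne x),
      deriv_const_mul (3/2) (((dm2.fun_div dm1 (fun y => hne y)).fun_pow 2) x),
      deriv_fun_pow ((dm2 x).fun_div (dm1 x) (hne x)) 2,
      deriv_fun_div (dm2 x) (dm1 x) (hne x)]
  -- put everything together
  have hd4 : Differentiable ℝ (deriv (deriv (deriv (deriv m)))) :=
    (contDiff_infty_iff_deriv.mp (contDiff_infty_iff_deriv.mp hm3).2).1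
  rw [e4, deriv_fun_div (dA x) ((dm1.fun_pow 3) x) (pow_ne_zero 3 (hne x)),
    deriv_fun_pow (dm1 x) 3, hA, hP, hQ, hs x, hds]
  have hx := hne x
  field_simp
  ring
end
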